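/- arXiv:1608.03766 — 2 statements merged into one kernel-verified Lean document; each statement's English description precedes it below -/
import Mathlib

section
/- Let H = L²(0,1), let E = C([0,1]) with the supremum norm, and let ι : E → H be the canonical continuous linear embedding. Let μ be a Borel probability measure on E and let ι_*μ denote its pushforward to H. Let z ∈ E and suppose w ∈ L¹(H, ι_*μ) satisfies ∫_H ⟨Dψ(y), ι z⟩_H (ι_*μ)(dy) = ∫_H ψ(y) w(y) (ι_*μ)(dy) for every ψ ∈ C¹_b(H). Then for every φ ∈ C¹_b(E): ∫_E Dφ(x)(z) μ(dx) = ∫_E φ(x) w(ι x) μ(dx). -/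
open MeasureTheory Filter

noncomputable section

/-- `E = C([0,1])` with the supremum norm. -/
abbrev E : Type := C(Set.Icc (0:ℝ) 1, ℝ)

/-- `H = L²(0,1)`. -/
abbrev H : Type := Lp ℝ 2 (volume : Measure (Set.Icc (0:ℝ) 1))

/-- The canonical continuous linear embedding `ι : E → H`. -/
def iota : E →L[ℝ] H := ContinuousMap.toLp 2 volume ℝ

/-- `φ ∈ C¹_b(X)`: `φ` is continuously Fréchet differentiable, bounded, with bounded
derivative. -/
def IsC1b {X : Type*} [NormedAddCommGroup X] [NormedSpace ℝ X] (φ : X → ℝ) : Prop :=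
  ContDiff ℝ 1 φ ∧ (∃ C, ∀ x, |φ x| ≤ C) ∧ (∃ C, ∀ x, ‖fderiv ℝ φ x‖ ≤ C)

instance : MeasurableSpace E := borel E
instance : BorelSpace E := ⟨rfl⟩
instance : MeasurableSpace H := borel H
instance : BorelSpace H := ⟨rfl⟩

/-!
Averaging over windows of length `δ` gives continuous linear maps `T_δ : H → E` with
`T_δ (ι x) → x` in `E` as `δ → 0⁺`. For `ψ = φ ∘ T_δ ∈ C¹_b(H)` the chain rule turns the
hypothesis into `∫ Dφ(T_δ ι x)(T_δ ι z) μ(dx) = ∫ φ(T_δ ι x) w(ι x) μ(dx)`, and since `φ` and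
`Dφ` are bounded and `w ∘ ι` is `μ`-integrable, dominated convergence lets `δ → 0⁺` on both sides.
-/

open Topology
open scoped symmDiff RealInnerProductSpace

section Transfer

variable {X Y : Type*} [NormedAddCommGroup X] [NormedSpace ℝ X]
  [NormedAddCommGroup Y] [NormedSpace ℝ Y]

theorem fderiv_comp_continuousLinearMap {F : Type*} [NormedAddCommGroup F] [NormedSpace ℝ F]
    {φ : X → F} (hφ : Differentiable ℝ φ) (T : Y →L[ℝ] X) (y : Y) :
    fderiv ℝ (φ ∘ T) y = (fderiv ℝ φ (T y)).comp T := by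
  rw [fderiv_comp y (hφ _) T.differentiableAt, T.fderiv]

theorem IsC1b.comp_continuousLinearMap {φ : X → ℝ} (hφ : IsC1b φ) (T : Y →L[ℝ] X) :
    IsC1b (φ ∘ T) := by
  obtain ⟨hφ1, ⟨C, hC⟩, ⟨C', hC'⟩⟩ := hφ
  refine ⟨hφ1.comp T.contDiff, ⟨C, fun y => hC _⟩, ⟨C' * ‖T‖, fun y => ?_⟩⟩
  rw [fderiv_comp_continuousLinearMap (hφ1.differentiable one_ne_zero) T y]
  exact (ContinuousLinearMap.opNorm_comp_le _ _).trans (by gcongr; exact hC' _)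

variable [MeasurableSpace X] [BorelSpace X] [MeasurableSpace Y] [BorelSpace Y]
  {μ : Measure X} {ι : X →L[ℝ] Y} {z : X} {w : Y → ℝ} {φ : X → ℝ}

theorem integral_fderiv_comp_apply_eq (hw : Integrable w (μ.map ι))
    (hweight : ∀ ψ : Y → ℝ, IsC1b ψ →
      ∫ y, fderiv ℝ ψ y (ι z) ∂(μ.map ι) = ∫ y, ψ y * w y ∂(μ.map ι))
    (hφ : IsC1b φ) (T : Y →L[ℝ] X) :
    ∫ x, fderiv ℝ φ (T (ι x)) (T (ι z)) ∂μ = ∫ x, φ (T (ι x)) * w (ι x) ∂μ := by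
  have hι : AEMeasurable ι μ := ι.continuous.aemeasurable
  have hDφ : Continuous (fderiv ℝ φ) := hφ.1.continuous_fderiv one_ne_zero
  have h := hweight _ (hφ.comp_continuousLinearMap T)
  simp only [fderiv_comp_continuousLinearMap (hφ.1.differentiable one_ne_zero),
    ContinuousLinearMap.comp_apply, Function.comp_apply] at h
  rwa [integral_map (f := fun y => fderiv ℝ φ (T y) (T (ι z))) hι
      ((hDφ.comp T.continuous).clm_apply continuous_const).aestronglyMeasurable,
    integral_map (f := fun y => φ (T y) * w y) hι
      ((hφ.1.continuous.comp T.continuous).aestronglyMeasurable.mul hw.1)] at h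

theorem integral_fderiv_apply_eq_of_tendsto [IsFiniteMeasure μ] (hw : Integrable w (μ.map ι))
    (hweight : ∀ ψ : Y → ℝ, IsC1b ψ →
      ∫ y, fderiv ℝ ψ y (ι z) ∂(μ.map ι) = ∫ y, ψ y * w y ∂(μ.map ι))
    (hφ : IsC1b φ) {β : Type*} {l : Filter β} [l.IsCountablyGenerated] [l.NeBot]
    (T : β → Y →L[ℝ] X) (hT : ∀ x, Tendsto (fun i => T i (ι x)) l (𝓝 x)) :
    ∫ x, fderiv ℝ φ x z ∂μ = ∫ x, φ x * w (ι x) ∂μ := by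
  obtain ⟨hφ1, ⟨Cφ, hCφ⟩, ⟨CD, hCD⟩⟩ := id hφ
  have hDφ : Continuous (fderiv ℝ φ) := hφ1.continuous_fderiv one_ne_zero
  have hwι : Integrable (fun x => w (ι x)) μ := hw.comp_aemeasurable ι.continuous.aemeasurable
  have hTz : ∀ᶠ i in l, ‖T i (ι z)‖ ≤ ‖z‖ + 1 :=
    (hT z).norm.eventually_le_const (lt_add_one _)
  have hlhs : Tendsto (fun i => ∫ x, fderiv ℝ φ (T i (ι x)) (T i (ι z)) ∂μ) l
      (𝓝 (∫ x, fderiv ℝ φ x z ∂μ)) := by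
    refine tendsto_integral_filter_of_dominated_convergence (fun _ => CD * (‖z‖ + 1))
      (Eventually.of_forall fun i => ?_) (hTz.mono fun i hi => ?_) (integrable_const _)
      (Eventually.of_forall fun x => ?_)
    · exact ((hDφ.comp ((T i).continuous.comp ι.continuous)).clm_apply
        continuous_const).aestronglyMeasurable
    · refine Eventually.of_forall fun x => ?_
      exact ((fderiv ℝ φ _).le_opNorm _).trans
        (mul_le_mul (hCD _) hi (norm_nonneg _) ((norm_nonneg _).trans (hCD 0)))
    · exact (isBoundedBilinearMap_apply.continuous.tendsto _).comp
        (((hDφ.tendsto x).comp (hT x)).prodMk_nhds (hT z))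
  have hrhs : Tendsto (fun i => ∫ x, φ (T i (ι x)) * w (ι x) ∂μ) l
      (𝓝 (∫ x, φ x * w (ι x) ∂μ)) := by
    refine tendsto_integral_filter_of_dominated_convergence (fun x => Cφ * ‖w (ι x)‖)
      (Eventually.of_forall fun i => ?_) (Eventually.of_forall fun i => ?_)
      (hwι.norm.const_mul Cφ) (Eventually.of_forall fun x => ?_)
    · exact (hφ1.continuous.comp ((T i).continuous.comp ι.continuous)).aestronglyMeasurable.mul
        hwι.1
    · refine Eventually.of_forall fun x => ?_
      rw [norm_mul]
      exact mul_le_mul_of_nonneg_right (hCφ _) (norm_nonneg _)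
    · exact ((hφ1.continuous.tendsto x).comp (hT x)).mul_const _
  refine tendsto_nhds_unique ?_ hrhs
  simpa only [integral_fderiv_comp_apply_eq hw hweight hφ] using hlhs

end Transfer

def ContinuousMap.innerSL {T F : Type*} [TopologicalSpace T] [CompactSpace T]
    [NormedAddCommGroup F] [InnerProductSpace ℝ F] (k : C(T, F)) : F →L[ℝ] C(T, ℝ) :=
  LinearMap.mkContinuous
    { toFun := fun y => ⟨fun t => ⟪k t, y⟫, by fun_prop⟩
      map_add' := fun y y' => by ext t; exact inner_add_right _ _ _
      map_smul' := fun c y => by ext t; exact inner_smul_right _ _ _ }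
    ‖k‖ fun y => (ContinuousMap.norm_le _ (by positivity)).2 fun t =>
      (norm_inner_le_norm _ _).trans (by gcongr; exact k.norm_coe_le_norm t)

theorem ContinuousMap.innerSL_apply_apply {T F : Type*} [TopologicalSpace T] [CompactSpace T]
    [NormedAddCommGroup F] [InnerProductSpace ℝ F] (k : C(T, F)) (y : F) (t : T) :
    k.innerSL y t = ⟪k t, y⟫ :=
  rfl

/-- The window `[(1 - δ) t, (1 - δ) t + δ]` contains `t` and, for `δ ≤ 1`, lies in `[0, 1]`. -/
def slidingWindow (δ : ℝ) (t : Set.Icc (0:ℝ) 1) : Set (Set.Icc (0:ℝ) 1) :=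
  Subtype.val ⁻¹' Set.Icc ((1 - δ) * t) ((1 - δ) * t + δ)

section SlidingWindow

variable {δ : ℝ} {t : Set.Icc (0:ℝ) 1}

theorem measurableSet_slidingWindow (δ : ℝ) (t : Set.Icc (0:ℝ) 1) :
    MeasurableSet (slidingWindow δ t) :=
  measurable_subtype_coe measurableSet_Icc

theorem volume_slidingWindow (hδ1 : δ ≤ 1) :
    volume (slidingWindow δ t) = ENNReal.ofReal δ := by
  obtain ⟨ht0, ht1⟩ := t.2
  have hsub : Set.Icc ((1 - δ) * t) ((1 - δ) * t + δ) ⊆ Set.Icc 0 1 :=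
    Set.Icc_subset_Icc (by nlinarith) (by nlinarith)
  rw [slidingWindow, volume_preimage_coe nullMeasurableSet_Icc measurableSet_Icc,
    Set.inter_eq_self_of_subset_left hsub, Real.volume_Icc, add_sub_cancel_left]

theorem dist_le_of_mem_slidingWindow (hδ0 : 0 ≤ δ) {s : Set.Icc (0:ℝ) 1}
    (hs : s ∈ slidingWindow δ t) : dist s t ≤ δ := by
  obtain ⟨ht0, ht1⟩ := t.2
  obtain ⟨hs0, hs1⟩ := hs
  rw [Subtype.dist_eq, Real.dist_eq, abs_le]
  constructor <;> nlinarith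

theorem volume_slidingWindow_symmDiff_le (δ : ℝ) (t t' : Set.Icc (0:ℝ) 1) :
    volume (slidingWindow δ t ∆ slidingWindow δ t') ≤
      ENNReal.ofReal (2 * (|1 - δ| * dist t t')) := by
  set a := (1 - δ) * (t : ℝ)
  set b := (1 - δ) * (t' : ℝ)
  have hsub :
      Set.Icc a (a + δ) ∆ Set.Icc b (b + δ) ⊆ Set.uIcc a b ∪ Set.uIcc (a + δ) (b + δ) := by
    intro x
    simp only [Set.mem_symmDiff, Set.mem_union, Set.mem_Icc, Set.mem_uIcc]
    grind
  have hab : |b - a| = |1 - δ| * dist t t' := by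
    rw [Subtype.dist_eq, Real.dist_eq, ← abs_mul, abs_sub_comm]
    congr 1
    ring
  calc volume (slidingWindow δ t ∆ slidingWindow δ t')
      ≤ volume (Set.Icc a (a + δ) ∆ Set.Icc b (b + δ)) := by
        rw [slidingWindow, slidingWindow, ← Set.preimage_symmDiff,
          volume_preimage_coe nullMeasurableSet_Icc
            (measurableSet_Icc.symmDiff measurableSet_Icc)]
        exact measure_mono Set.inter_subset_left
    _ ≤ volume (Set.uIcc a b) + volume (Set.uIcc (a + δ) (b + δ)) :=
        (measure_mono hsub).trans (measure_union_le _ _)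
    _ = ENNReal.ofReal (2 * (|1 - δ| * dist t t')) := by
        rw [Real.volume_interval, Real.volume_interval, add_sub_add_right_eq_sub, hab,
          ← ENNReal.ofReal_add (by positivity) (by positivity), two_mul]

end SlidingWindow

def windowKernel (δ : ℝ) (t : Set.Icc (0:ℝ) 1) : H :=
  indicatorConstLp 2 (measurableSet_slidingWindow δ t) (measure_ne_top _ _) δ⁻¹

theorem continuous_windowKernel (δ : ℝ) : Continuous (windowKernel δ) := by
  refine continuous_indicatorConstLp_set (by norm_num) fun t => ?_
  have hbound :
      Tendsto (fun t' => ENNReal.ofReal (2 * (|1 - δ| * dist t' t))) (𝓝 t) (𝓝 0) := by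
    rw [← ENNReal.ofReal_zero]
    refine ENNReal.tendsto_ofReal ?_
    simpa using (by fun_prop : Continuous fun t' => 2 * (|1 - δ| * dist t' t)).tendsto t
  exact tendsto_of_tendsto_of_tendsto_of_le_of_le tendsto_const_nhds hbound (fun _ => bot_le)
    fun t' => volume_slidingWindow_symmDiff_le δ t' t

def windowAverage (δ : ℝ) : H →L[ℝ] E :=
  ContinuousMap.innerSL ⟨windowKernel δ, continuous_windowKernel δ⟩

theorem windowAverage_iota_apply (δ : ℝ) (x : E) (t : Set.Icc (0:ℝ) 1) :
    windowAverage δ (iota x) t = δ⁻¹ * ∫ s in slidingWindow δ t, x s := by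
  rw [windowAverage, ContinuousMap.innerSL_apply_apply, ContinuousMap.coe_mk, windowKernel,
    L2.inner_indicatorConstLp_eq_setIntegral_inner, ← integral_const_mul]
  refine integral_congr_ae (ae_restrict_of_ae ?_)
  filter_upwards [ContinuousMap.coeFn_toLp (p := 2) (μ := volume) (𝕜 := ℝ) x] with s hs
  rw [iota, hs, real_inner_eq_re_inner, RCLike.inner_apply]
  simp [mul_comm]

theorem dist_windowAverage_iota_le {δ ε : ℝ} (hδ0 : 0 < δ) (hδ1 : δ ≤ 1) {x : E}
    (hx : ∀ s t, dist s t ≤ δ → dist (x s) (x t) ≤ ε) :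
    dist (windowAverage δ (iota x)) x ≤ ε := by
  have hε : 0 ≤ ε := dist_nonneg.trans (hx 0 0 (by simpa using hδ0.le))
  refine (ContinuousMap.dist_le hε).2 fun t => ?_
  have hvol : volume.real (slidingWindow δ t) = δ := by
    rw [measureReal_def, volume_slidingWindow hδ1, ENNReal.toReal_ofReal hδ0.le]
  have hx_int : Integrable x (volume : Measure (Set.Icc (0:ℝ) 1)) :=
    x.continuous.integrable_of_hasCompactSupport (HasCompactSupport.of_compactSpace _)
  have hdiff :
      windowAverage δ (iota x) t - x t = δ⁻¹ * ∫ s in slidingWindow δ t, (x s - x t) := by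
    rw [windowAverage_iota_apply,
      integral_sub hx_int.integrableOn (integrableOn_const (measure_ne_top _ _)),
      setIntegral_const, hvol, smul_eq_mul]
    field_simp
  have hint : ‖∫ s in slidingWindow δ t, (x s - x t)‖ ≤ ε * δ := by
    refine (norm_setIntegral_le_of_norm_le_const (measure_lt_top _ _) fun s hs => ?_).trans_eq
      (by rw [hvol])
    exact hx s t (dist_le_of_mem_slidingWindow hδ0.le hs)
  calc dist (windowAverage δ (iota x) t) (x t)
      = δ⁻¹ * ‖∫ s in slidingWindow δ t, (x s - x t)‖ := by
        rw [dist_eq_norm, hdiff, norm_mul, Real.norm_of_nonneg (by positivity)]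
    _ ≤ δ⁻¹ * (ε * δ) := by gcongr
    _ = ε := by field_simp

theorem tendsto_windowAverage_iota (x : E) :
    Tendsto (fun δ => windowAverage δ (iota x)) (𝓝[>] 0) (𝓝 x) := by
  rw [Metric.tendsto_nhdsWithin_nhds]
  intro ε hε
  obtain ⟨η, hη, hxη⟩ := Metric.uniformContinuous_iff.1
    (CompactSpace.uniformContinuous_of_continuous x.continuous) (ε / 2) (half_pos hε)
  refine ⟨min η 1, by positivity, fun δ (hδ : 0 < δ) hδη => ?_⟩
  rw [Real.dist_0_eq_abs, abs_of_pos hδ, lt_min_iff] at hδη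
  exact (dist_windowAverage_iota_le hδ hδη.2.le
    fun s t hst => (hxη (hst.trans_lt hδη.1)).le).trans_lt (half_lt_self hε)

/-- If `w ∈ L¹(H, ι_*μ)` is an integration-by-parts weight for `(ι_*μ, ι z)`
on `H`, then the integration-by-parts formula transfers to `E`:
`∫_E Dφ(x)(z) μ(dx) = ∫_E φ(x) w(ι x) μ(dx)` for every `φ ∈ C¹_b(E)`. -/
theorem integration_by_parts_transfer
    (μ : Measure E) [IsProbabilityMeasure μ] (z : E) (w : H → ℝ)
    (hw : Integrable w (μ.map iota))
    (hweight : ∀ ψ : H → ℝ, IsC1b ψ →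
      ∫ y, fderiv ℝ ψ y (iota z) ∂(μ.map iota) = ∫ y, ψ y * w y ∂(μ.map iota))
    (φ : E → ℝ) (hφ : IsC1b φ) :
    ∫ x, fderiv ℝ φ x z ∂μ = ∫ x, φ x * w (iota x) ∂μ :=
  integral_fderiv_apply_eq_of_tendsto hw hweight hφ windowAverage tendsto_windowAverage_iota
end
end

section
/- Let E be a separable real Banach space, μ a Borel probability measure on E, z ∈ E, p ∈ (1,∞) with conjugate exponent p′ = p/(p−1), and let w ∈ L^{p′}(E,μ) be an integration-by-parts weight for (μ,z). If (φ_n) ⊆ C¹_b(E) satisfies φ_n → 0 in L^p(E,μ) and the functions x ↦ Dφ_n(x)(z) converge in L^p(E,μ) to some F, then F = 0 μ-almost everywhere. (Hence the directional derivative operator φ ↦ Dφ(·)(z) with domain C¹_b(E) is closable in L^p(E,μ).) -/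
/-!
Testing against `ψ ∈ C¹_b` and applying the integration-by-parts identity to `φₙ ψ` gives
`∫ ψ ∂_z φₙ dμ = ∫ φₙ ψ w dμ - ∫ φₙ ∂_z ψ dμ`. By Hölder the right-hand side tends to `0`,
while the left-hand side tends to `∫ ψ F dμ`; so `F` annihilates `C¹_b`. The functions
`arctan ∘ ℓ`, `ℓ ∈ E*`, make `C¹_b` a point-separating subalgebra of bounded continuous functions
on the Polish space `E`, so it separates finite measures; applied to `F⁺ μ` and `F⁻ μ` this gives
`F = 0` a.e.
-/

open MeasureTheory Filter

noncomputable section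

theorem tendsto_integral_mul_of_tendsto_eLpNorm_zero {α : Type*} [MeasurableSpace α]
    {μ : Measure α} {p q : ENNReal} [p.HolderConjugate q] {g : ℕ → α → ℝ}
    (hg : ∀ n, AEStronglyMeasurable (g n) μ)
    (hg0 : Tendsto (fun n => eLpNorm (g n) p μ) atTop (nhds 0))
    {h : α → ℝ} (hh : MemLp h q μ) :
    Tendsto (fun n => ∫ x, g n x * h x ∂μ) atTop (nhds 0) := by
  have holder : ∀ n, ‖∫ x, g n x * h x ∂μ‖ₑ ≤ eLpNorm (g n) p μ * eLpNorm h q μ := fun n =>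
    calc ‖∫ x, g n x * h x ∂μ‖ₑ ≤ eLpNorm (g n • h) 1 μ := by
          rw [eLpNorm_one_eq_lintegral_enorm]; exact enorm_integral_le_lintegral_enorm _
      _ ≤ eLpNorm (g n) p μ * eLpNorm h q μ := eLpNorm_smul_le_mul_eLpNorm (r := 1) hh.1 (hg n)
  have hbound : Tendsto (fun n => eLpNorm (g n) p μ * eLpNorm h q μ) atTop (nhds 0) := by
    simpa using ENNReal.Tendsto.mul_const hg0 (Or.inr hh.eLpNorm_ne_top)
  exact tendsto_zero_iff_enorm_tendsto_zero.2
    (tendsto_of_tendsto_of_tendsto_of_le_of_le tendsto_const_nhds hbound (fun _ => zero_le) holder)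

open BoundedContinuousFunction in
theorem ae_eq_zero_of_forall_mem_subalgebra_integral_mul_eq_zero {X : Type*}
    [MeasurableSpace X] [PseudoEMetricSpace X] [BorelSpace X] [CompleteSpace X]
    [SecondCountableTopology X] {μ : Measure X} [IsFiniteMeasure μ] {F : X → ℝ}
    (hF : Integrable F μ) {A : StarSubalgebra ℝ (X →ᵇ ℝ)}
    (hA : (A.map (toContinuousMapStarₐ ℝ)).SeparatesPoints)
    (hAF : ∀ g ∈ A, ∫ x, g x * F x ∂μ = 0) : F =ᵐ[μ] 0 := by
  have := isFiniteMeasure_withDensity_ofReal hF.2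
  have := isFiniteMeasure_withDensity_ofReal (f := fun x => -F x) hF.neg.2
  have integral_withDensity_ofReal (f : X → ℝ) (hf : Integrable f μ) (g : X →ᵇ ℝ) :
      ∫ x, g x ∂μ.withDensity (fun x => ENNReal.ofReal (f x)) = ∫ x, g x * max (f x) 0 ∂μ := by
    rw [integral_withDensity_eq_integral_toReal_smul₀ hf.1.aemeasurable.ennreal_ofReal
      (ae_of_all _ fun _ => ENNReal.ofReal_lt_top)]
    simp only [ENNReal.toReal_ofReal', smul_eq_mul, mul_comm]
  have integrable_mul_max (f : X → ℝ) (hf : Integrable f μ) (g : X →ᵇ ℝ) :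
      Integrable (fun x => g x * max (f x) 0) μ :=
    hf.pos_part.bdd_mul g.continuous.aestronglyMeasurable (ae_of_all _ g.norm_coe_le_norm)
  have hPP : μ.withDensity (fun x => ENNReal.ofReal (F x)) =
      μ.withDensity (fun x => ENNReal.ofReal (-F x)) := by
    refine ext_of_forall_mem_subalgebra_integral_eq_of_pseudoEMetric_complete_countable hA
      fun g hg => ?_
    rw [integral_withDensity_ofReal F hF, integral_withDensity_ofReal (fun x => -F x) hF.neg,
      ← sub_eq_zero,
      ← integral_sub (integrable_mul_max F hF g) (integrable_mul_max (fun x => -F x) hF.neg g)]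
    simpa only [← mul_sub, max_zero_sub_max_neg_zero_eq_self] using hAF g hg
  filter_upwards [(withDensity_eq_iff_of_sigmaFinite hF.1.aemeasurable.ennreal_ofReal
    hF.1.aemeasurable.neg.ennreal_ofReal).1 hPP] with x hx
  rw [Pi.zero_apply, ← max_zero_sub_max_neg_zero_eq_self (F x), ← ENNReal.toReal_ofReal',
    ← ENNReal.toReal_ofReal', hx]
  exact sub_self _

section

variable {E : Type*} [NormedAddCommGroup E] [NormedSpace ℝ E]

namespace IsC1b

variable {φ ψ : E → ℝ}

theorem continuous (hφ : IsC1b φ) : Continuous φ := hφ.1.continuous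

theorem differentiable (hφ : IsC1b φ) : Differentiable ℝ φ := hφ.1.differentiable one_ne_zero

theorem exists_bound (hφ : IsC1b φ) : ∃ C, ∀ x, ‖φ x‖ ≤ C := hφ.2.1

theorem continuous_fderiv_apply (hφ : IsC1b φ) (z : E) : Continuous fun x => fderiv ℝ φ x z :=
  (hφ.1.continuous_fderiv one_ne_zero).clm_apply continuous_const

theorem exists_bound_fderiv_apply (hφ : IsC1b φ) (z : E) : ∃ C, ∀ x, ‖fderiv ℝ φ x z‖ ≤ C := by
  obtain ⟨C, hC⟩ := hφ.2.2
  exact ⟨C * ‖z‖, fun x => ((fderiv ℝ φ x).le_opNorm z).trans (by gcongr; exact hC x)⟩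

theorem add (hφ : IsC1b φ) (hψ : IsC1b ψ) : IsC1b (fun x => φ x + ψ x) := by
  obtain ⟨Cφ, hCφ⟩ := hφ.2.1
  obtain ⟨Cψ, hCψ⟩ := hψ.2.1
  obtain ⟨Dφ, hDφ⟩ := hφ.2.2
  obtain ⟨Dψ, hDψ⟩ := hψ.2.2
  refine ⟨hφ.1.add hψ.1, ⟨Cφ + Cψ, fun x => (abs_add_le _ _).trans (add_le_add (hCφ x) (hCψ x))⟩,
    ⟨Dφ + Dψ, fun x => ?_⟩⟩
  rw [fderiv_fun_add (hφ.differentiable x) (hψ.differentiable x)]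
  exact (norm_add_le _ _).trans (add_le_add (hDφ x) (hDψ x))

theorem mul (hφ : IsC1b φ) (hψ : IsC1b ψ) : IsC1b (fun x => φ x * ψ x) := by
  obtain ⟨Cφ, hCφ⟩ := hφ.2.1
  obtain ⟨Cψ, hCψ⟩ := hψ.2.1
  obtain ⟨Dφ, hDφ⟩ := hφ.2.2
  obtain ⟨Dψ, hDψ⟩ := hψ.2.2
  have hCφ0 : 0 ≤ Cφ := (abs_nonneg _).trans (hCφ 0)
  have hCψ0 : 0 ≤ Cψ := (abs_nonneg _).trans (hCψ 0)
  refine ⟨hφ.1.mul hψ.1, ⟨Cφ * Cψ, fun x => ?_⟩, ⟨Cφ * Dψ + Cψ * Dφ, fun x => ?_⟩⟩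
  · rw [abs_mul]
    exact mul_le_mul (hCφ x) (hCψ x) (abs_nonneg _) hCφ0
  · rw [fderiv_fun_mul (hφ.differentiable x) (hψ.differentiable x)]
    refine (norm_add_le _ _).trans (add_le_add ?_ ?_) <;> rw [norm_smul, Real.norm_eq_abs]
    · exact mul_le_mul (hCφ x) (hDψ x) (norm_nonneg _) hCφ0
    · exact mul_le_mul (hCψ x) (hDφ x) (norm_nonneg _) hCψ0

variable [MeasurableSpace E] [OpensMeasurableSpace E] {μ : Measure E} [IsFiniteMeasure μ]

theorem memLp (hφ : IsC1b φ) (p : ENNReal) : MemLp φ p μ :=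
  have ⟨C, hC⟩ := hφ.exists_bound
  MemLp.of_bound hφ.continuous.aestronglyMeasurable C (.of_forall hC)

theorem memLp_fderiv_apply (hφ : IsC1b φ) (z : E) (p : ENNReal) :
    MemLp (fun x => fderiv ℝ φ x z) p μ :=
  have ⟨C, hC⟩ := hφ.exists_bound_fderiv_apply z
  MemLp.of_bound (hφ.continuous_fderiv_apply z).aestronglyMeasurable C (.of_forall hC)

theorem integrable_mul_fderiv_apply (hψ : IsC1b ψ) (hφ : IsC1b φ) (z : E) :
    Integrable (fun x => ψ x * fderiv ℝ φ x z) μ :=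
  (hψ.memLp ⊤).integrable_mul (hφ.memLp_fderiv_apply z 1)

end IsC1b

theorem isC1b_const (c : ℝ) : IsC1b fun _ : E => c :=
  ⟨contDiff_const, ⟨|c|, fun _ => le_rfl⟩, ⟨0, fun _ => by simp⟩⟩

theorem isC1b_arctan_comp (ℓ : E →L[ℝ] ℝ) : IsC1b fun x => Real.arctan (ℓ x) := by
  refine ⟨Real.contDiff_arctan.comp ℓ.contDiff, ⟨Real.pi / 2, fun x => ?_⟩, ⟨‖ℓ‖, fun x => ?_⟩⟩
  · exact abs_le.2 ⟨(Real.neg_pi_div_two_lt_arctan _).le, (Real.arctan_lt_pi_div_two _).le⟩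
  · rw [ℓ.hasFDerivAt.arctan.fderiv, norm_smul]
    refine mul_le_of_le_one_left (norm_nonneg _) ?_
    rw [Real.norm_eq_abs, abs_of_pos (by positivity), div_le_one (by positivity)]
    nlinarith [sq_nonneg (ℓ x)]

open BoundedContinuousFunction in
def c1bStarSubalgebra : StarSubalgebra ℝ (E →ᵇ ℝ) where
  carrier := {f | IsC1b f}
  mul_mem' := IsC1b.mul
  add_mem' := IsC1b.add
  algebraMap_mem' := isC1b_const
  -- `star` is the identity on `E →ᵇ ℝ`
  star_mem' := id

open BoundedContinuousFunction in
theorem c1bStarSubalgebra_separatesPoints :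
    ((c1bStarSubalgebra (E := E)).map (toContinuousMapStarₐ ℝ)).SeparatesPoints := by
  intro x y hxy
  obtain ⟨ℓ, -, hℓ⟩ := exists_dual_vector'' ℝ (x - y)
  have hC1b := isC1b_arctan_comp ℓ
  obtain ⟨C, hC⟩ := hC1b.exists_bound
  refine ⟨_, ⟨_, ⟨ofNormedAddCommGroup _ hC1b.continuous C hC, hC1b, rfl⟩, rfl⟩, ?_⟩
  have : ℓ x ≠ ℓ y := by
    rw [← sub_ne_zero, ← map_sub, hℓ]
    exact_mod_cast norm_ne_zero_iff.2 (sub_ne_zero.2 hxy)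
  exact Real.arctan_injective.ne this

theorem ae_eq_zero_of_forall_isC1b_integral_mul_eq_zero [CompleteSpace E]
    [TopologicalSpace.SeparableSpace E] [MeasurableSpace E] [BorelSpace E] {μ : Measure E}
    [IsFiniteMeasure μ] {F : E → ℝ} (hF : Integrable F μ)
    (hψF : ∀ ψ, IsC1b ψ → ∫ x, ψ x * F x ∂μ = 0) : F =ᵐ[μ] 0 :=
  ae_eq_zero_of_forall_mem_subalgebra_integral_mul_eq_zero hF c1bStarSubalgebra_separatesPoints
    fun g => hψF g

def IsIntegrationByPartsWeight [MeasurableSpace E] (μ : Measure E) (z : E) (w : E → ℝ) : Prop :=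
  ∀ φ : E → ℝ, IsC1b φ → ∫ x, fderiv ℝ φ x z ∂μ = ∫ x, φ x * w x ∂μ

namespace IsIntegrationByPartsWeight

variable [MeasurableSpace E] [OpensMeasurableSpace E] {μ : Measure E} [IsFiniteMeasure μ]
  {z : E} {w : E → ℝ}

theorem integral_mul_fderiv_apply (hw : IsIntegrationByPartsWeight μ z w) {φ ψ : E → ℝ}
    (hφ : IsC1b φ) (hψ : IsC1b ψ) :
    ∫ x, ψ x * fderiv ℝ φ x z ∂μ =
      ∫ x, φ x * (ψ x * w x) ∂μ - ∫ x, φ x * fderiv ℝ ψ x z ∂μ := by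
  have leibniz : ∀ x, fderiv ℝ (fun y => φ y * ψ y) x z =
      φ x * fderiv ℝ ψ x z + ψ x * fderiv ℝ φ x z := fun x => by
    rw [fderiv_fun_mul (hφ.differentiable x) (hψ.differentiable x)]
    simp
  have h := hw _ (hφ.mul hψ)
  simp only [leibniz] at h
  rw [integral_add (hφ.integrable_mul_fderiv_apply hψ z) (hψ.integrable_mul_fderiv_apply hφ z)]
    at h
  simp only [mul_assoc] at h
  linarith

theorem integral_mul_eq_zero_of_tendsto_eLpNorm (hw : IsIntegrationByPartsWeight μ z w)
    {p q : ENNReal} [p.HolderConjugate q] (hwq : MemLp w q μ)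
    {φ : ℕ → E → ℝ} (hφ : ∀ n, IsC1b (φ n))
    (hφ0 : Tendsto (fun n => eLpNorm (φ n) p μ) atTop (nhds 0))
    {F : E → ℝ} (hF : MemLp F p μ)
    (hDφF : Tendsto (fun n => eLpNorm (fun x => fderiv ℝ (φ n) x z - F x) p μ) atTop (nhds 0))
    {ψ : E → ℝ} (hψ : IsC1b ψ) :
    ∫ x, ψ x * F x ∂μ = 0 := by
  have tendsto_integral_ψF :
      Tendsto (fun n => ∫ x, ψ x * fderiv ℝ (φ n) x z ∂μ) atTop (nhds (∫ x, ψ x * F x ∂μ)) := by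
    have hψF : Integrable (fun x => ψ x * F x) μ := (hψ.memLp q).integrable_mul hF
    have split : ∀ n, ∫ x, (fderiv ℝ (φ n) x z - F x) * ψ x ∂μ =
        ∫ x, ψ x * fderiv ℝ (φ n) x z ∂μ - ∫ x, ψ x * F x ∂μ := fun n => by
      rw [← integral_sub (hψ.integrable_mul_fderiv_apply (hφ n) z) hψF]
      congr with x
      ring
    have h := tendsto_integral_mul_of_tendsto_eLpNorm_zero
      (fun n => ((hφ n).continuous_fderiv_apply z).aestronglyMeasurable.sub hF.1) hDφF
      (hψ.memLp q)
    simpa [split] using h.add_const (∫ x, ψ x * F x ∂μ)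
  have tendsto_zero : Tendsto (fun n => ∫ x, ψ x * fderiv ℝ (φ n) x z ∂μ) atTop (nhds 0) := by
    simp_rw [hw.integral_mul_fderiv_apply (hφ _) hψ]
    have hψw : MemLp (fun x => ψ x * w x) q μ := hwq.mul' (hψ.memLp ⊤)
    have hφm : ∀ n, AEStronglyMeasurable (φ n) μ := fun n =>
      (hφ n).continuous.aestronglyMeasurable
    simpa using (tendsto_integral_mul_of_tendsto_eLpNorm_zero hφm hφ0 hψw).sub
      (tendsto_integral_mul_of_tendsto_eLpNorm_zero hφm hφ0 (hψ.memLp_fderiv_apply z q))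
  exact tendsto_nhds_unique tendsto_integral_ψF tendsto_zero

end IsIntegrationByPartsWeight

end

/-- Closability of the directional derivative operator `φ ↦ Dφ(·)(z)` in
`L^p(E,μ)`: if `w ∈ L^{p'}(E,μ)` is an integration-by-parts weight for `(μ,z)`,
`(φ_n) ⊆ C¹_b(E)` tends to `0` in `L^p` and `Dφ_n(·)(z)` tends to `F` in `L^p`, then
`F = 0` μ-a.e. -/
theorem directional_derivative_closable
    {E : Type*} [NormedAddCommGroup E] [NormedSpace ℝ E] [CompleteSpace E]
    [TopologicalSpace.SeparableSpace E] [MeasurableSpace E] [BorelSpace E]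
    (μ : Measure E) [IsProbabilityMeasure μ] (z : E)
    (p : ℝ) (hp : 1 < p)
    (w : E → ℝ) (hw : MemLp w (ENNReal.ofReal (p / (p - 1))) μ)
    (hweight : ∀ φ : E → ℝ, IsC1b φ → ∫ x, fderiv ℝ φ x z ∂μ = ∫ x, φ x * w x ∂μ)
    (φn : ℕ → E → ℝ) (hφn : ∀ n, IsC1b (φn n))
    (hφn0 : Tendsto (fun n => eLpNorm (φn n) (ENNReal.ofReal p) μ) atTop (nhds 0))
    (F : E → ℝ) (hF : MemLp F (ENNReal.ofReal p) μ)
    (hDconv : Tendsto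
      (fun n => eLpNorm (fun x => fderiv ℝ (φn n) x z - F x) (ENNReal.ofReal p) μ)
      atTop (nhds 0)) :
    F =ᵐ[μ] 0 := by
  have : (ENNReal.ofReal p).HolderConjugate (ENNReal.ofReal (p / (p - 1))) :=
    (Real.HolderConjugate.conjExponent hp).ennrealOfReal
  exact ae_eq_zero_of_forall_isC1b_integral_mul_eq_zero
    (hF.integrable (ENNReal.one_le_ofReal.2 hp.le))
    fun _ hψ => IsIntegrationByPartsWeight.integral_mul_eq_zero_of_tendsto_eLpNorm
      hweight hw hφn hφn0 hF hDconv hψ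
end
end
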